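/- Let L be the Laplacian of a connected weighted graph on n nodes and let e = {i,j} be a pair of distinct indices. Then for every weight w > 0, the improvement of the squared spectral zeta function ζ₂²(L) = tr((L^†)²) obtained by adding the weighted edge w·L_e is bounded by a fundamental limit independent of w: ζ₂²(L) − ζ₂²(L + wL_e) ≤ 2 r_e(L³)/r_e(L) − [r_e(L²)/r_e(L)]². -/

import Mathlib

open Filter Finset Matrix

/-- `L` is the Laplacian matrix of a connected weighted graph: symmetric positive semidefinite,
`L 𝟙 = 0`, and the kernel of `L` is exactly the span of the all-ones vector. -/
def IsConnLaplacian {n : ℕ} (L : Matrix (Fin n) (Fin n) ℝ) : Prop :=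
  L.PosSemidef ∧ (L *ᵥ (fun _ => (1 : ℝ)) = 0) ∧
    ∀ v : Fin n → ℝ, L *ᵥ v = 0 → ∃ c : ℝ, v = fun _ => c

/-- The all-ones `n × n` matrix `J`. -/
def Jmat (n : ℕ) : Matrix (Fin n) (Fin n) ℝ := Matrix.of fun _ _ => (1 : ℝ)

/-- Moore–Penrose pseudoinverse of a connected-graph Laplacian:
`L^† = (L + (1/n) J)⁻¹ − (1/n) J`. -/
noncomputable def lapPinv {n : ℕ} (L : Matrix (Fin n) (Fin n) ℝ) : Matrix (Fin n) (Fin n) ℝ :=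
  (L + (1 / (n : ℝ)) • Jmat n)⁻¹ - (1 / (n : ℝ)) • Jmat n

/-- The single-edge Laplacian `L_e = (δ_i − δ_j)(δ_i − δ_j)ᵀ`. -/
def edgeLap {n : ℕ} (i j : Fin n) : Matrix (Fin n) (Fin n) ℝ :=
  Matrix.vecMulVec (Pi.single i 1 - Pi.single j 1) (Pi.single i 1 - Pi.single j 1)

/-- Effective resistance `r_e(L^m)` between nodes `i` and `j`, computed from `L^{†,m}`. -/
noncomputable def reff {n : ℕ} (L : Matrix (Fin n) (Fin n) ℝ) (m : ℕ) (i j : Fin n) : ℝ :=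
  (lapPinv L ^ m) i i + (lapPinv L ^ m) j j - 2 * (lapPinv L ^ m) i j

/-!
Write `u = δ_i - δ_j`, `v = L^† u` and `r_m = r_e(L^m) = uᵀ L^{†,m} u`. Since `J u = 0`, the
Sherman–Morrison formula for the invertible matrix `L + J/n` gives
`(L + w L_e)^† = L^† - c v vᵀ` with `c = w / (1 + w r₁)`, so the improvement of `ζ₂²` is
`2 c r₃ - c² r₂²`. Cauchy–Schwarz for the positive semidefinite form `L^†` gives `r₂² ≤ r₁ r₃`,
so the vertex `r₃ / r₂²` of this concave quadratic in `c` lies beyond `1 / r₁ > c`, and the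
improvement is bounded by its value at `c = 1 / r₁`, i.e. by the limit `w → ∞`.
-/

namespace Matrix

variable {ι : Type*} [Fintype ι]

theorem inv_add_vecMulVec [DecidableEq ι] {K : Type*} [Field K] (A : Matrix ι ι K)
    (hA : IsUnit A.det) (x y : ι → K) (h : 1 + y ⬝ᵥ (A⁻¹ *ᵥ x) ≠ 0) :
    (A + vecMulVec x y)⁻¹ =
      A⁻¹ - (1 + y ⬝ᵥ (A⁻¹ *ᵥ x))⁻¹ • vecMulVec (A⁻¹ *ᵥ x) (y ᵥ* A⁻¹) := by
  set s := y ⬝ᵥ (A⁻¹ *ᵥ x)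
  have hAx : A *ᵥ (A⁻¹ *ᵥ x) = x := by rw [mulVec_mulVec, mul_nonsing_inv A hA, one_mulVec]
  have hcoef : 1 - (1 + s)⁻¹ - (1 + s)⁻¹ * s = 0 := by
    linear_combination -(inv_mul_cancel₀ h)
  apply inv_eq_right_inv
  rw [add_mul, mul_sub, mul_sub, Matrix.mul_smul, Matrix.mul_smul, mul_nonsing_inv A hA,
    mul_vecMulVec A, hAx, vecMulVec_mul_vecMulVec, vecMulVec_mul, vecMulVec_smul, smul_smul]
  calc _ = 1 + (1 - (1 + s)⁻¹ - (1 + s)⁻¹ * s) • vecMulVec x (y ᵥ* A⁻¹) := by module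
    _ = 1 := by rw [hcoef, zero_smul, add_zero]

theorem PosSemidef.dotProduct_mulVec_sq_le {M : Matrix ι ι ℝ} (hM : M.PosSemidef)
    (x y : ι → ℝ) :
    (x ⬝ᵥ (M *ᵥ y)) ^ 2 ≤ (x ⬝ᵥ (M *ᵥ x)) * (y ⬝ᵥ (M *ᵥ y)) := by
  have hsymm : y ⬝ᵥ (M *ᵥ x) = x ⬝ᵥ (M *ᵥ y) := by
    rw [← dotProduct_transpose_mulVec, (isHermitian_iff_isSymm.mp hM.1).eq]
  have hquad : ∀ t : ℝ,
      0 ≤ (y ⬝ᵥ (M *ᵥ y)) * (t * t) + 2 * (x ⬝ᵥ (M *ᵥ y)) * t + x ⬝ᵥ (M *ᵥ x) := by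
    intro t
    have := hM.dotProduct_mulVec_nonneg (x + t • y)
    simp only [star_trivial, mulVec_add, mulVec_smul, dotProduct_add, add_dotProduct,
      dotProduct_smul, smul_dotProduct, hsymm, smul_eq_mul] at this
    linarith
  have := discrim_le_zero hquad
  rw [discrim] at this
  linarith

theorem trace_sq_sub_smul_vecMulVec [DecidableEq ι] {R : Type*} [CommRing R] {M : Matrix ι ι R}
    (hM : M.IsSymm) (c : R) (v : ι → R) :
    ((M - c • vecMulVec v v) ^ 2).trace =
      (M ^ 2).trace - 2 * c * (v ⬝ᵥ (M *ᵥ v)) + c ^ 2 * (v ⬝ᵥ v) ^ 2 := by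
  have hvM : v ᵥ* M = M *ᵥ v := by rw [← mulVec_transpose, hM.eq]
  rw [sq, sub_mul, mul_sub, mul_sub, Matrix.mul_smul, Matrix.smul_mul, Matrix.smul_mul,
    Matrix.mul_smul, mul_vecMulVec, vecMulVec_mul, vecMulVec_mul_vecMulVec, hvM, vecMulVec_smul,
    ← sq]
  simp only [trace_sub, trace_smul, trace_vecMulVec, smul_eq_mul, dotProduct_comm v (M *ᵥ v)]
  ring

theorem IsSymm.single_sub_single_dotProduct_mulVec {R : Type*} [CommRing R] [DecidableEq ι]
    {B : Matrix ι ι R} (hB : B.IsSymm) (i j : ι) :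
    (Pi.single i 1 - Pi.single j 1) ⬝ᵥ (B *ᵥ (Pi.single i 1 - Pi.single j 1)) =
      B i i + B j j - 2 * B i j := by
  simp only [mulVec_sub, mulVec_single_one, sub_dotProduct, dotProduct_sub, single_dotProduct,
    col_apply, one_mul, hB.apply i j]
  ring

end Matrix

section Laplacian

variable {n : ℕ}

theorem Jmat_mulVec (x : Fin n → ℝ) : Jmat n *ᵥ x = fun _ => ∑ k, x k := by
  ext a
  simp [Jmat, mulVec, dotProduct]

theorem vecMul_Jmat (x : Fin n → ℝ) : x ᵥ* Jmat n = fun _ => ∑ k, x k := by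
  ext a
  simp [Jmat, vecMul, dotProduct]

theorem isSymm_Jmat : (Jmat n).IsSymm := by
  ext a b
  simp [Jmat]

theorem one_div_smul_Jmat_mul_Jmat : (1 / (n : ℝ)) • Jmat n * Jmat n = Jmat n := by
  ext a b
  have hn : (n : ℝ) ≠ 0 := by exact_mod_cast a.pos.ne'
  simp [Jmat, mul_apply, hn]

theorem mul_Jmat_eq_zero {L : Matrix (Fin n) (Fin n) ℝ} (h : L *ᵥ (fun _ => (1 : ℝ)) = 0) :
    L * Jmat n = 0 := by
  ext a b
  simpa [Jmat, mul_apply, mulVec, dotProduct] using congrFun h a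

noncomputable def lapShift (L : Matrix (Fin n) (Fin n) ℝ) : Matrix (Fin n) (Fin n) ℝ :=
  L + (1 / (n : ℝ)) • Jmat n

theorem lapPinv_eq_inv_lapShift_sub (L : Matrix (Fin n) (Fin n) ℝ) :
    lapPinv L = (lapShift L)⁻¹ - (1 / (n : ℝ)) • Jmat n := rfl

theorem lapShift_mul_Jmat {L : Matrix (Fin n) (Fin n) ℝ} (h : L *ᵥ (fun _ => (1 : ℝ)) = 0) :
    lapShift L * Jmat n = Jmat n := by
  rw [lapShift, add_mul, mul_Jmat_eq_zero h, one_div_smul_Jmat_mul_Jmat, zero_add]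

theorem lapPinv_mulVec_of_sum_eq_zero (L : Matrix (Fin n) (Fin n) ℝ) {x : Fin n → ℝ}
    (hx : ∑ k, x k = 0) : lapPinv L *ᵥ x = (lapShift L)⁻¹ *ᵥ x := by
  rw [lapPinv_eq_inv_lapShift_sub, sub_mulVec, smul_mulVec, Jmat_mulVec, hx]
  simp [← Pi.zero_def]

theorem vecMul_lapPinv_of_sum_eq_zero (L : Matrix (Fin n) (Fin n) ℝ) {x : Fin n → ℝ}
    (hx : ∑ k, x k = 0) : x ᵥ* lapPinv L = x ᵥ* (lapShift L)⁻¹ := by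
  rw [lapPinv_eq_inv_lapShift_sub, vecMul_sub, vecMul_smul, vecMul_Jmat, hx]
  simp [← Pi.zero_def]

theorem lapPinv_add_vecMulVec {L : Matrix (Fin n) (Fin n) ℝ} (hL : IsUnit (lapShift L).det)
    {x y : Fin n → ℝ} (hx : ∑ k, x k = 0) (hy : ∑ k, y k = 0)
    (h : 1 + y ⬝ᵥ (lapPinv L *ᵥ x) ≠ 0) :
    lapPinv (L + vecMulVec x y) = lapPinv L -
      (1 + y ⬝ᵥ (lapPinv L *ᵥ x))⁻¹ • vecMulVec (lapPinv L *ᵥ x) (y ᵥ* lapPinv L) := by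
  rw [lapPinv_mulVec_of_sum_eq_zero L hx] at h ⊢
  rw [vecMul_lapPinv_of_sum_eq_zero L hy, lapPinv_eq_inv_lapShift_sub,
    lapPinv_eq_inv_lapShift_sub, show lapShift (L + vecMulVec x y) = lapShift L + vecMulVec x y
      from add_right_comm .., inv_add_vecMulVec _ hL x y h, sub_right_comm]

theorem reff_eq_dotProduct_mulVec {L : Matrix (Fin n) (Fin n) ℝ} (hL : (lapPinv L).IsSymm)
    (m : ℕ) (i j : Fin n) :
    reff L m i j = (Pi.single i 1 - Pi.single j 1) ⬝ᵥ
      (lapPinv L ^ m *ᵥ (Pi.single i 1 - Pi.single j 1)) :=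
  ((hL.pow m).single_sub_single_dotProduct_mulVec i j).symm

theorem sum_single_sub_single (i j : Fin n) :
    ∑ k, (Pi.single i 1 - Pi.single j 1 : Fin n → ℝ) k = 0 := by
  simp [Finset.sum_sub_distrib]

namespace IsConnLaplacian

variable {L : Matrix (Fin n) (Fin n) ℝ}

theorem posDef_lapShift (hL : IsConnLaplacian L) : (lapShift L).PosDef := by
  obtain ⟨hpsd, -, hker⟩ := hL
  refine .of_dotProduct_mulVec_pos ?_ fun x hx => ?_
  · exact isHermitian_iff_isSymm.mpr
      ((isHermitian_iff_isSymm.mp hpsd.1).add (isSymm_Jmat.smul _))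
  have hn : (0 : ℝ) < n := by
    obtain ⟨k, -⟩ := Function.ne_iff.mp hx
    exact_mod_cast k.pos
  have hquad : star x ⬝ᵥ (lapShift L *ᵥ x) =
      star x ⬝ᵥ (L *ᵥ x) + 1 / n * (∑ k, x k) ^ 2 := by
    rw [lapShift, add_mulVec, dotProduct_add, smul_mulVec, dotProduct_smul, Jmat_mulVec]
    simp [dotProduct, ← Finset.sum_mul, sq]
  have hLx := hpsd.dotProduct_mulVec_nonneg x
  rw [hquad]
  by_contra! hle
  have hLx0 : L *ᵥ x = 0 := (hpsd.dotProduct_mulVec_zero_iff x).mp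
    (le_antisymm (by nlinarith [sq_nonneg (∑ k, x k), one_div_pos.mpr hn]) hLx)
  obtain ⟨c, rfl⟩ := hker x hLx0
  have hc : c = 0 := by
    simp only [hLx0, dotProduct_zero, Finset.sum_const, Finset.card_univ, Fintype.card_fin,
      nsmul_eq_mul, zero_add] at hle
    field_simp at hle
    by_contra hc
    have : 0 < c ^ 2 := by positivity
    linarith [mul_pos hn this]
  exact hx (funext fun _ => hc)

theorem isUnit_det_lapShift (hL : IsConnLaplacian L) : IsUnit (lapShift L).det :=
  (isUnit_iff_isUnit_det _).mp hL.posDef_lapShift.isUnit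

theorem inv_lapShift_mul_Jmat (hL : IsConnLaplacian L) : (lapShift L)⁻¹ * Jmat n = Jmat n := by
  conv_lhs => rw [← lapShift_mul_Jmat hL.2.1, ← Matrix.mul_assoc,
    nonsing_inv_mul _ hL.isUnit_det_lapShift, Matrix.one_mul]

theorem Jmat_mul_inv_lapShift (hL : IsConnLaplacian L) : Jmat n * (lapShift L)⁻¹ = Jmat n := by
  have hA : (lapShift L)⁻¹.IsSymm :=
    (isHermitian_iff_isSymm.mp hL.posDef_lapShift.inv.1)
  rw [← isSymm_Jmat.eq, ← hA.eq, ← transpose_mul, inv_lapShift_mul_Jmat hL]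

theorem lapPinv_eq_conj (hL : IsConnLaplacian L) :
    lapPinv L =
      (1 - (1 / (n : ℝ)) • Jmat n) * (lapShift L)⁻¹ * (1 - (1 / (n : ℝ)) • Jmat n) := by
  rw [lapPinv_eq_inv_lapShift_sub, sub_mul, Matrix.one_mul, Matrix.smul_mul,
    hL.Jmat_mul_inv_lapShift, mul_sub, Matrix.mul_one, Matrix.mul_smul, sub_mul,
    hL.inv_lapShift_mul_Jmat, one_div_smul_Jmat_mul_Jmat, sub_self, smul_zero, sub_zero]

theorem posSemidef_lapPinv (hL : IsConnLaplacian L) : (lapPinv L).PosSemidef := by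
  have hP : (1 - (1 / (n : ℝ)) • Jmat n)ᴴ = 1 - (1 / (n : ℝ)) • Jmat n :=
    isHermitian_iff_isSymm.mpr ((isSymm_one).sub (isSymm_Jmat.smul _))
  have := hL.posDef_lapShift.inv.posSemidef.conjTranspose_mul_mul_same
    (1 - (1 / (n : ℝ)) • Jmat n)
  rwa [hP, ← hL.lapPinv_eq_conj] at this

theorem reff_pos (hL : IsConnLaplacian L) {i j : Fin n} (hij : i ≠ j) : 0 < reff L 1 i j := by
  have hu : (Pi.single i 1 - Pi.single j 1 : Fin n → ℝ) ≠ 0 := by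
    intro h
    simpa [hij.symm] using congrFun h i
  rw [reff_eq_dotProduct_mulVec (isHermitian_iff_isSymm.mp hL.posSemidef_lapPinv.1), pow_one,
    lapPinv_mulVec_of_sum_eq_zero L (sum_single_sub_single i j)]
  simpa using hL.posDef_lapShift.inv.dotProduct_mulVec_pos hu

theorem lapPinv_add_smul_edgeLap (hL : IsConnLaplacian L) (i j : Fin n) {w : ℝ} (hw : 0 ≤ w) :
    lapPinv (L + w • edgeLap i j) = lapPinv L - (w / (1 + w * reff L 1 i j)) •
      vecMulVec (lapPinv L *ᵥ (Pi.single i 1 - Pi.single j 1))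
        (lapPinv L *ᵥ (Pi.single i 1 - Pi.single j 1)) := by
  set u : Fin n → ℝ := Pi.single i 1 - Pi.single j 1
  have hM := hL.posSemidef_lapPinv
  have hMs : (lapPinv L).IsSymm := isHermitian_iff_isSymm.mp hM.1
  have hr : reff L 1 i j = u ⬝ᵥ (lapPinv L *ᵥ u) := by
    rw [reff_eq_dotProduct_mulVec hMs, pow_one]
  have hden : 0 < 1 + w * reff L 1 i j := by
    have := hM.dotProduct_mulVec_nonneg u
    rw [star_trivial, ← hr] at this
    positivity
  have hu : ∑ k, u k = 0 := sum_single_sub_single i j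
  have hwu : ∑ k, (w • u) k = 0 := by simp [← Finset.mul_sum, hu]
  have huM : u ᵥ* lapPinv L = lapPinv L *ᵥ u := by rw [← mulVec_transpose, hMs.eq]
  rw [edgeLap, ← smul_vecMulVec, lapPinv_add_vecMulVec hL.isUnit_det_lapShift hwu hu,
    mulVec_smul, dotProduct_smul, smul_eq_mul, ← hr, smul_vecMulVec, smul_smul, huM,
    div_eq_inv_mul]
  rw [mulVec_smul, dotProduct_smul, smul_eq_mul, ← hr]
  exact hden.ne'

end IsConnLaplacian

end Laplacian

theorem two_mul_mul_sub_sq_mul_sq_le {a b c t : ℝ} (ha : 0 < a) (hb : b ^ 2 ≤ a * c)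
    (hta : t * a ≤ 1) :
    2 * t * c - t ^ 2 * b ^ 2 ≤ 2 * c / a - (b / a) ^ 2 := by
  have hfactor : 2 * c / a - (b / a) ^ 2 - (2 * t * c - t ^ 2 * b ^ 2) =
      (1 - t * a) * (2 * c * a - (1 + t * a) * b ^ 2) / a ^ 2 := by
    field_simp
    ring
  have hsecond : 0 ≤ 2 * c * a - (1 + t * a) * b ^ 2 := by
    nlinarith [mul_nonneg (sub_nonneg.mpr hta) (sq_nonneg b)]
  have := div_nonneg (mul_nonneg (sub_nonneg.mpr hta) hsecond) (sq_nonneg a)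
  linarith

/-- Fundamental limit on the improvement of ζ₂²(L) = tr((L^†)²) by adding one weighted
edge, independent of the edge weight. -/
theorem zeta_two_sq_improvement_fundamental_limit {n : ℕ}
    (L : Matrix (Fin n) (Fin n) ℝ) (hL : IsConnLaplacian L)
    (i j : Fin n) (hij : i ≠ j) (w : ℝ) (hw : 0 < w) :
    (lapPinv L ^ 2).trace - (lapPinv (L + w • edgeLap i j) ^ 2).trace ≤
      2 * reff L 3 i j / reff L 1 i j - (reff L 2 i j / reff L 1 i j) ^ 2 := by
  set M := lapPinv L
  set u : Fin n → ℝ := Pi.single i 1 - Pi.single j 1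
  set v := M *ᵥ u
  have hM : M.PosSemidef := hL.posSemidef_lapPinv
  have hMs : M.IsSymm := isHermitian_iff_isSymm.mp hM.1
  have huM : u ᵥ* M = v := by rw [← mulVec_transpose, hMs.eq]
  have hr₁ : reff L 1 i j = u ⬝ᵥ v := by rw [reff_eq_dotProduct_mulVec hMs, pow_one]
  have huMv : u ⬝ᵥ (M *ᵥ v) = v ⬝ᵥ v := by rw [dotProduct_mulVec, huM]
  have hr₂ : reff L 2 i j = v ⬝ᵥ v := by
    rw [reff_eq_dotProduct_mulVec hMs, sq, ← mulVec_mulVec, huMv]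
  have hr₃ : reff L 3 i j = v ⬝ᵥ (M *ᵥ v) := by
    rw [reff_eq_dotProduct_mulVec hMs, pow_succ, pow_two, ← mulVec_mulVec, ← mulVec_mulVec,
      dotProduct_mulVec, huM]
  have hpos := hL.reff_pos hij
  have hden : 0 < 1 + w * reff L 1 i j := by positivity
  have hCS := hM.dotProduct_mulVec_sq_le u v
  rw [huMv, ← hr₁, ← hr₂, ← hr₃] at hCS
  rw [hL.lapPinv_add_smul_edgeLap i j hw.le, trace_sq_sub_smul_vecMulVec hMs, ← hr₃, ← hr₂]
  have := two_mul_mul_sub_sq_mul_sq_le hpos hCS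
    (t := w / (1 + w * reff L 1 i j)) (by rw [div_mul_eq_mul_div, div_le_one hden]; linarith)
  linarith
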